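/- First derivative of the squared Carnot–Carathéodory distance in the Reeb direction (the identity T r² = φ in the proof of Proposition 6.4): let c > 0 and let φ : (0,∞) → (0,π) satisfy χ(φ(t))·c = t for every t > 0. Define s : (0,∞) → ℝ by s(t) = c·φ(t)²/(sin φ(t))². Then s is differentiable and for every t > 0, s'(t) = φ(t). -/

import Mathlib

/-!
Writing `t = χ(φ) c`, the function `φ` is the inverse of `x ↦ χ(x) c`, which is strictly
increasing on `(0, π)` because `χ'(x) = 2 (sin x − x cos x) / sin³ x > 0`. Hence `φ` is continuous
and differentiable with `φ' = 1 / (χ'(φ) c)`. The point is the identity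
`(x² / sin² x)' = x χ'(x)`, so by the chain rule `s' = c φ χ'(φ) · φ' = φ`.
-/

open Real Set

/-- The profile function `χ(φ) = φ/(sin φ)² − cot φ` appearing in the explicit formula
for the Carnot–Carathéodory distance to the origin on the Heisenberg group.
(Note: with Lean's convention `x / 0 = 0`, this formula also gives `χ(0) = 0`.) -/
noncomputable def chi (φ : ℝ) : ℝ := φ / Real.sin φ ^ 2 - Real.cos φ / Real.sin φ

noncomputable def chiDeriv (x : ℝ) : ℝ := 2 * (sin x - x * cos x) / sin x ^ 3

lemma hasDerivAt_chi {x : ℝ} (hx : sin x ≠ 0) : HasDerivAt chi (chiDeriv x) x := by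
  have hquot := ((hasDerivAt_id' x).div ((hasDerivAt_sin x).pow 2) (pow_ne_zero 2 hx)).sub
    ((hasDerivAt_cos x).div (hasDerivAt_sin x) hx)
  refine hquot.congr_deriv ?_
  simp only [chiDeriv, Pi.pow_apply]
  field_simp
  linear_combination sin x ^ 2 * sin_sq_add_cos_sq x

lemma hasDerivAt_mul_sq_div_sin_sq (c : ℝ) {x : ℝ} (hx : sin x ≠ 0) :
    HasDerivAt (fun x => c * x ^ 2 / sin x ^ 2) (c * x * chiDeriv x) x := by
  have hquot := (((hasDerivAt_id' x).pow 2).const_mul c).div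
    ((hasDerivAt_sin x).pow 2) (pow_ne_zero 2 hx)
  refine hquot.congr_deriv ?_
  simp only [chiDeriv, Pi.pow_apply]
  field_simp
  ring

lemma sin_sub_mul_cos_pos {x : ℝ} (hx : x ∈ Ioo 0 π) : 0 < sin x - x * cos x := by
  obtain ⟨h0, hπ⟩ := hx
  have hsin : 0 < sin x := sin_pos_of_pos_of_lt_pi h0 hπ
  rcases le_or_gt (cos x) 0 with hcos | hcos
  · nlinarith [mul_nonpos_of_nonneg_of_nonpos h0.le hcos]
  · have hlt : x < π / 2 := by
      by_contra! h
      exact (cos_nonpos_of_pi_div_two_le_of_le h (by linarith [pi_pos])).not_gt hcos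
    have htan := lt_tan h0 hlt
    rw [tan_eq_sin_div_cos, lt_div_iff₀ hcos] at htan
    linarith

lemma chiDeriv_pos {x : ℝ} (hx : x ∈ Ioo 0 π) : 0 < chiDeriv x := by
  have := sin_pos_of_pos_of_lt_pi hx.1 hx.2
  have := sin_sub_mul_cos_pos hx
  unfold chiDeriv
  positivity

lemma chi_pos {x : ℝ} (hx : x ∈ Ioo 0 π) : 0 < chi x := by
  have hsin : 0 < sin x := sin_pos_of_pos_of_lt_pi hx.1 hx.2
  have hnum : 0 < x - sin x * cos x := by
    have h2 := sin_lt (by linarith [hx.1] : 0 < 2 * x)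
    rw [sin_two_mul] at h2
    linarith
  have hchi : chi x = (x - sin x * cos x) / sin x ^ 2 := by
    unfold chi
    field_simp
  rw [hchi]
  positivity

lemma chi_strictMonoOn : StrictMonoOn chi (Ioo 0 π) := by
  have hderiv (x : ℝ) (hx : x ∈ Ioo 0 π) : HasDerivAt chi (chiDeriv x) x :=
    hasDerivAt_chi (sin_pos_of_pos_of_lt_pi hx.1 hx.2).ne'
  refine strictMonoOn_of_deriv_pos (convex_Ioo 0 π)
    (fun x hx => (hderiv x hx).continuousAt.continuousWithinAt) fun x hx => ?_
  rw [interior_Ioo] at hx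
  rw [(hderiv x hx).deriv]
  exact chiDeriv_pos hx

section InverseOfChi

variable {c : ℝ} (hc : 0 < c) {φ : ℝ → ℝ}
  (hφ : ∀ t : ℝ, 0 < t → φ t ∈ Ioo 0 π ∧ chi (φ t) * c = t)
include hc hφ

lemma strictMonoOn_of_chi_mul_eq : StrictMonoOn φ (Ioi 0) := by
  intro a ha b hb hab
  have hchi : chi (φ a) * c < chi (φ b) * c := by rw [(hφ a ha).2, (hφ b hb).2]; exact hab
  exact (chi_strictMonoOn.lt_iff_lt (hφ a ha).1 (hφ b hb).1).1 (lt_of_mul_lt_mul_right hchi hc.le)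

lemma image_Ioi_of_chi_mul_eq : φ '' Ioi 0 = Ioo 0 π := by
  refine Subset.antisymm (image_subset_iff.2 fun t ht => (hφ t ht).1) fun x hx => ?_
  have ht : 0 < chi x * c := mul_pos (chi_pos hx) hc
  refine ⟨chi x * c, ht, chi_strictMonoOn.injOn (hφ _ ht).1 hx ?_⟩
  exact mul_right_cancel₀ hc.ne' (hφ _ ht).2

lemma continuousAt_of_chi_mul_eq {t : ℝ} (ht : 0 < t) : ContinuousAt φ t := by
  refine (strictMonoOn_of_chi_mul_eq hc hφ).continuousAt_of_image_mem_nhds (Ioi_mem_nhds ht) ?_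
  rw [image_Ioi_of_chi_mul_eq hc hφ]
  exact Ioo_mem_nhds (hφ t ht).1.1 (hφ t ht).1.2

lemma hasDerivAt_of_chi_mul_eq {t : ℝ} (ht : 0 < t) :
    HasDerivAt φ (chiDeriv (φ t) * c)⁻¹ t := by
  have hmem := (hφ t ht).1
  have hchi := (hasDerivAt_chi (sin_pos_of_pos_of_lt_pi hmem.1 hmem.2).ne').mul_const c
  refine hchi.of_local_left_inverse (continuousAt_of_chi_mul_eq hc hφ ht)
    (mul_pos (chiDeriv_pos hmem) hc).ne' ?_
  filter_upwards [Ioi_mem_nhds ht] with y hy using (hφ y hy).2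

end InverseOfChi

/-- the identity `T r² = φ` in the proof of Proposition 6.4: if
`χ(φ(t))·c = t` for all `t > 0` with `φ(t) ∈ (0, π)`, then the squared distance
`s(t) = c·φ(t)²/(sin φ(t))²` is differentiable with `s'(t) = φ(t)`. -/
theorem sq_dist_reeb_deriv (c : ℝ) (hc : 0 < c) (φ : ℝ → ℝ)
    (hφ : ∀ t : ℝ, 0 < t → φ t ∈ Set.Ioo 0 π ∧ chi (φ t) * c = t) :
    ∀ t : ℝ, 0 < t →
      HasDerivAt (fun t => c * φ t ^ 2 / Real.sin (φ t) ^ 2) (φ t) t := by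
  intro t ht
  have hmem := (hφ t ht).1
  have hs := (hasDerivAt_mul_sq_div_sin_sq c (sin_pos_of_pos_of_lt_pi hmem.1 hmem.2).ne').comp t
    (hasDerivAt_of_chi_mul_eq hc hφ ht)
  refine hs.congr_deriv ?_
  have := (chiDeriv_pos hmem).ne'
  field_simp
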